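/- arXiv:math/0407491 — 2 statements merged into one kernel-verified Lean document; each statement's English description precedes it below -/
import Mathlib

section
/- Let m ∈ M be a Demazure root of V. Then the integer Σ_{v∈V} ⟨v, m⟩ is nonnegative; moreover, m is semisimple (i.e., −m is also a Demazure root of V) if and only if Σ_{v∈V} ⟨v, m⟩ = 0. -/
open Finset

/-- The pairing `⟨v, m⟩ = ∑ i, v i * m i` between `N = ℤ^d` and `M = ℤ^d`. -/
def pairZ {d : ℕ} (v m : Fin d → ℤ) : ℤ := ∑ i, v i * m i

/-- `m` is a Demazure root of the finite set `V ⊆ N`: `⟨v, m⟩ = -1` for some `v ∈ V`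
and `⟨v', m⟩ ≥ 0` for all other `v' ∈ V`. -/
def IsDemazureRoot {d : ℕ} (V : Finset (Fin d → ℤ)) (m : Fin d → ℤ) : Prop :=
  ∃ v ∈ V, pairZ v m = -1 ∧ ∀ v' ∈ V, v' ≠ v → 0 ≤ pairZ v' m

/-- The set of nonnegative real combinations of elements of `V` is all of `ℝ^d`. -/
def PosSpans {d : ℕ} (V : Finset (Fin d → ℤ)) : Prop :=
  ∀ x : Fin d → ℝ, ∃ c : (Fin d → ℤ) → ℝ, (∀ v, 0 ≤ c v) ∧
    x = ∑ v ∈ V, c v • (fun i => ((v i : ℤ) : ℝ))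

lemma pairZ_neg_right {d : ℕ} (v m : Fin d → ℤ) : pairZ v (-m) = -pairZ v m := by
  simp [pairZ, mul_neg, Finset.sum_neg_distrib]

/-- If `V` positively spans and `m ≠ 0`, some `v ∈ V` pairs positively with `m`. -/
lemma exists_pos_pair {d : ℕ} (V : Finset (Fin d → ℤ)) (hVs : PosSpans V)
    (m : Fin d → ℤ) (hm : m ≠ 0) : ∃ v ∈ V, 0 < pairZ v m := by
  obtain ⟨c, hc, hx⟩ := hVs (fun i => (m i : ℝ))
  by_contra h
  push_neg at h
  have key : (∑ i, ((m i : ℝ)) ^ 2) = ∑ v ∈ V, c v * (pairZ v m : ℝ) := by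
    calc ∑ i, ((m i : ℝ)) ^ 2
        = ∑ i, (∑ v ∈ V, c v • (fun j => ((v j : ℤ) : ℝ))) i * (m i : ℝ) := by
          rw [← hx]; simp [sq]
      _ = ∑ v ∈ V, c v * (pairZ v m : ℝ) := by
          simp only [Finset.sum_apply, Pi.smul_apply, smul_eq_mul, Finset.sum_mul]
          rw [Finset.sum_comm]
          refine Finset.sum_congr rfl fun v _ => ?_
          simp [pairZ, Finset.mul_sum, mul_assoc]
  have hpos : 0 < ∑ i, ((m i : ℝ)) ^ 2 := by
    have hex : ∃ i, m i ≠ 0 := by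
      by_contra hz; push_neg at hz; exact hm (funext hz)
    obtain ⟨i, hi⟩ := hex
    refine Finset.sum_pos' (fun j _ => sq_nonneg _) ⟨i, Finset.mem_univ i, ?_⟩
    have : (m i : ℝ) ≠ 0 := Int.cast_ne_zero.mpr hi
    positivity
  have hle : ∑ v ∈ V, c v * (pairZ v m : ℝ) ≤ 0 :=
    Finset.sum_nonpos fun v hv => mul_nonpos_of_nonneg_of_nonpos (hc v)
      (by exact_mod_cast h v hv)
  linarith [key ▸ hpos]

lemma sum_pair_nonneg {d : ℕ} (V : Finset (Fin d → ℤ)) (hVs : PosSpans V)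
    (m : Fin d → ℤ) (hm : IsDemazureRoot V m) : 0 ≤ ∑ v ∈ V, pairZ v m := by
  obtain ⟨v, hv, hv1, hv2⟩ := hm
  have hmne : m ≠ 0 := by
    intro h; rw [h] at hv1; simp [pairZ] at hv1
  obtain ⟨w, hw, hwpos⟩ := exists_pos_pair V hVs m hmne
  have hwv : w ≠ v := by intro h; rw [h, hv1] at hwpos; norm_num at hwpos
  have hrw : ∑ v' ∈ V, pairZ v' m = pairZ v m + ∑ v' ∈ V.erase v, pairZ v' m :=
    (Finset.add_sum_erase V _ hv).symm
  have hT : pairZ w m ≤ ∑ v' ∈ V.erase v, pairZ v' m :=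
    Finset.single_le_sum (f := fun v' => pairZ v' m)
      (fun x hx => hv2 x (Finset.mem_of_mem_erase hx) (Finset.ne_of_mem_erase hx))
      (Finset.mem_erase.mpr ⟨hwv, hw⟩)
  omega

/-- If `m` is a Demazure root of `V`, then `∑_{v ∈ V} ⟨v, m⟩ ≥ 0`, and `m` is semisimple
(i.e. `-m` is also a Demazure root of `V`) if and only if `∑_{v ∈ V} ⟨v, m⟩ = 0`. -/
theorem stmt0 {d : ℕ} (V : Finset (Fin d → ℤ)) (hV0 : (0 : Fin d → ℤ) ∉ V)
    (hVs : PosSpans V) (m : Fin d → ℤ) (hm : IsDemazureRoot V m) :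
    0 ≤ ∑ v ∈ V, pairZ v m ∧
      (IsDemazureRoot V (-m) ↔ ∑ v ∈ V, pairZ v m = 0) := by
  have h1 := sum_pair_nonneg V hVs m hm
  refine ⟨h1, ?_, ?_⟩
  · intro hneg
    have h2 := sum_pair_nonneg V hVs (-m) hneg
    have hswap : ∑ v' ∈ V, pairZ v' (-m) = -∑ v' ∈ V, pairZ v' m := by
      rw [← Finset.sum_neg_distrib]
      exact Finset.sum_congr rfl fun v _ => pairZ_neg_right v m
    omega
  · intro hsum
    obtain ⟨v, hv, hv1, hv2⟩ := hm
    have hmne : m ≠ 0 := by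
      intro h; rw [h] at hv1; simp [pairZ] at hv1
    obtain ⟨w, hw, hwpos⟩ := exists_pos_pair V hVs m hmne
    have hwv : w ≠ v := by intro h; rw [h, hv1] at hwpos; norm_num at hwpos
    have hrw : ∑ v' ∈ V, pairZ v' m = pairZ v m + ∑ v' ∈ V.erase v, pairZ v' m :=
      (Finset.add_sum_erase V _ hv).symm
    have hrw2 : ∑ v' ∈ V.erase v, pairZ v' m
        = pairZ w m + ∑ v' ∈ (V.erase v).erase w, pairZ v' m :=
      (Finset.add_sum_erase _ _ (Finset.mem_erase.mpr ⟨hwv, hw⟩)).symm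
    have hrest_nonneg : ∀ x ∈ (V.erase v).erase w, 0 ≤ pairZ x m := fun x hx =>
      hv2 x (Finset.mem_of_mem_erase (Finset.mem_of_mem_erase hx))
        (Finset.ne_of_mem_erase (Finset.mem_of_mem_erase hx))
    have hrestsum : 0 ≤ ∑ x ∈ (V.erase v).erase w, pairZ x m :=
      Finset.sum_nonneg hrest_nonneg
    have hwm : pairZ w m = 1 := by omega
    have hzero : ∀ x ∈ (V.erase v).erase w, pairZ x m = 0 := by
      rw [← Finset.sum_eq_zero_iff_of_nonneg hrest_nonneg]
      omega
    refine ⟨w, hw, ?_, ?_⟩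
    · rw [pairZ_neg_right, hwm]
    · intro x hx hxw
      rw [pairZ_neg_right]
      by_cases hxv : x = v
      · rw [hxv, hv1]; norm_num
      · have := hzero x (Finset.mem_erase.mpr ⟨hxw, Finset.mem_erase.mpr ⟨hxv, hx⟩⟩)
        omega
end

section
/- Let b_1, …, b_l (l ≥ 1) be Demazure roots of V such that ⟨η_{b_i}, b_j⟩ = 0 for all 1 ≤ j < i ≤ l. Then b_1, …, b_l are linearly independent over ℝ and form a ℤ-basis of the lattice lin_ℝ(b_1,…,b_l) ∩ M; that is, every lattice point of M lying in the real linear span of b_1, …, b_l is a ℤ-linear combination of b_1, …, b_l. -/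
open Finset

/-- Real pairing between an integer vector and a real vector. -/
def pairR {d : ℕ} (v : Fin d → ℤ) (x : Fin d → ℝ) : ℝ := ∑ k, (v k : ℝ) * x k

lemma pairR_cast {d : ℕ} (v m : Fin d → ℤ) :
    pairR v (fun k => ((m k : ℤ) : ℝ)) = (pairZ v m : ℝ) := by
  simp [pairR, pairZ]

lemma pairR_sum {d l : ℕ} (v : Fin d → ℤ) (c : Fin l → ℝ) (w : Fin l → Fin d → ℝ) :
    pairR v (∑ j, c j • w j) = ∑ j, c j * pairR v (w j) := by
  simp only [pairR, Finset.sum_apply, Pi.smul_apply, smul_eq_mul, Finset.mul_sum]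
  rw [Finset.sum_comm]
  refine Finset.sum_congr rfl fun j _ => Finset.sum_congr rfl fun k _ => by ring

/-- If `b_1, …, b_l` (`l ≥ 1`) are Demazure roots of `V` with `⟨η_{b_i}, b_j⟩ = 0` for all
`j < i`, then the `b_i` are linearly independent over `ℝ` and form a `ℤ`-basis of
`lin_ℝ(b_1, …, b_l) ∩ M`: every lattice point in the real span of the `b_i` is a
`ℤ`-linear combination of them. -/
theorem stmt4 {d l : ℕ} (V : Finset (Fin d → ℤ)) (hV0 : (0 : Fin d → ℤ) ∉ V)
    (hVs : PosSpans V) (hl : 0 < l)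
    (b : Fin l → Fin d → ℤ) (hb : ∀ i, IsDemazureRoot V (b i))
    (horth : ∀ i j : Fin l, j < i → ∀ v ∈ V, pairZ v (b i) = -1 → pairZ v (b j) = 0) :
    LinearIndependent ℝ (fun i => (fun k => ((b i k : ℤ) : ℝ))) ∧
    ∀ x : Fin d → ℤ,
      (fun k => ((x k : ℤ) : ℝ)) ∈
        Submodule.span ℝ (Set.range fun i => (fun k => ((b i k : ℤ) : ℝ))) →
      ∃ c : Fin l → ℤ, x = ∑ i, c i • b i := by
  classical
  choose v hvV hv1 _ using hb
  have hM0 : ∀ i j : Fin l, j < i → pairZ (v i) (b j) = 0 := fun i j hji =>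
    horth i j hji (v i) (hvV i) (hv1 i)
  set bR : Fin l → Fin d → ℝ := fun i => (fun k => ((b i k : ℤ) : ℝ)) with hbR
  -- The key triangular-solve identity for the coefficients.
  have ci_eq : ∀ (c : Fin l → ℝ) (x : Fin d → ℝ), (∑ j, c j • bR j) = x →
      ∀ i, c i = (∑ j ∈ Finset.univ.filter (fun j => i < j),
        c j * (pairZ (v i) (b j) : ℝ)) - pairR (v i) x := by
    intro c x hc i
    have h1 : pairR (v i) x = ∑ j, c j * (pairZ (v i) (b j) : ℝ) := by
      rw [← hc, pairR_sum]
      exact Finset.sum_congr rfl fun j _ => by rw [pairR_cast]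
    have h2 : ∑ j, c j * (pairZ (v i) (b j) : ℝ)
        = c i * (pairZ (v i) (b i) : ℝ)
          + ∑ j ∈ Finset.univ.erase i, c j * (pairZ (v i) (b j) : ℝ) :=
      (Finset.add_sum_erase _ _ (Finset.mem_univ i)).symm
    have h3 : ∑ j ∈ (Finset.univ.erase i).filter (fun j => i < j),
          c j * (pairZ (v i) (b j) : ℝ)
        = ∑ j ∈ Finset.univ.erase i, c j * (pairZ (v i) (b j) : ℝ) := by
      apply Finset.sum_filter_of_ne
      intro j hj hne
      rcases lt_trichotomy i j with h | h | h
      · exact h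
      · exact absurd h.symm (Finset.ne_of_mem_erase hj)
      · exact absurd (by rw [hM0 i j h]; push_cast; ring) hne
    have h4 : (Finset.univ.erase i).filter (fun j => i < j)
        = Finset.univ.filter (fun j => i < j) := by
      ext j
      simp only [Finset.mem_filter, Finset.mem_erase, Finset.mem_univ, true_and, and_true]
      exact ⟨fun h => h.2, fun h => ⟨h.ne', h⟩⟩
    rw [h1, h2, hv1 i, ← h3, h4]
    push_cast
    ring
  constructor
  · rw [hbR, Fintype.linearIndependent_iff] at *
    intro c hc
    have hzero : ∀ n : ℕ, ∀ i : Fin l, l - i.val ≤ n → c i = 0 := by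
      intro n
      induction n with
      | zero => intro i hi; exact absurd hi (by have := i.isLt; omega)
      | succ n ih =>
        intro i hi
        rw [ci_eq c 0 hc i]
        have hx : pairR (v i) 0 = 0 := by simp [pairR]
        rw [hx, sub_zero]
        apply Finset.sum_eq_zero
        intro j hj
        simp only [Finset.mem_filter] at hj
        have hij : (i : ℕ) < (j : ℕ) := hj.2
        rw [ih j (by have := j.isLt; omega)]
        ring
    intro i
    exact hzero l i (by have := i.isLt; omega)
  · intro x hx
    rw [show (Set.range fun i => (fun k => ((b i k : ℤ) : ℝ))) = Set.range bR from rfl,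
      Submodule.mem_span_range_iff_exists_fun] at hx
    obtain ⟨c, hc⟩ := hx
    have hint : ∀ n : ℕ, ∀ i : Fin l, l - i.val ≤ n → c i ∈ (⊥ : Subring ℝ) := by
      intro n
      induction n with
      | zero => intro i hi; exact absurd hi (by have := i.isLt; omega)
      | succ n ih =>
        intro i hi
        rw [ci_eq c _ hc i]
        refine sub_mem ?_ ?_
        · refine sum_mem fun j hj => ?_
          simp only [Finset.mem_filter] at hj
          have hij : (i : ℕ) < (j : ℕ) := hj.2
          exact mul_mem (ih j (by have := j.isLt; omega)) (intCast_mem _ _)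
        · rw [pairR_cast]
          exact intCast_mem _ _
    have hex : ∀ i, ∃ m : ℤ, c i = m := fun i =>
      (Subring.mem_bot.1 (hint l i (by have := i.isLt; omega))).imp fun n h => h.symm
    choose m hm using hex
    refine ⟨m, ?_⟩
    funext k
    have hck := congrFun hc k
    simp only [Finset.sum_apply, Pi.smul_apply, smul_eq_mul, hbR, hm] at hck
    apply @Int.cast_injective ℝ
    push_cast
    simp only [Finset.sum_apply, Pi.smul_apply, smul_eq_mul]
    push_cast
    rw [← hck]
end
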